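/- If v is a nonzero corotation of u (standard words of length n), then for every k, I_k(ṽ) = I_k(ũ), where I_k denotes the maximum size of a k-bounded chain family of the extended function. -/

import Mathlib

/-- `w` is a standard word of length `n`: a permutation of `1, …, n`. -/
def IsStandardWord (n : ℕ) (w : List ℕ) : Prop :=
  w.Perm ((List.range n).map (· + 1))

/-- The cocharge label of the entry `i` of the standard word `w`:
the entry `1` is labeled `0`, and the entry `i+1` gets the label of `i`,
incremented by `1` exactly when `i+1` appears to the left of `i` in `w`. -/
def entryLabel (w : List ℕ) : ℕ → ℕ
  | 0 => 0
  | 1 => 0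
  | i + 2 => entryLabel w (i + 1) + (if w.idxOf (i + 2) < w.idxOf (i + 1) then 1 else 0)

/-- The cocharge labeling of `w`: each letter of `w` is replaced by its label. -/
def cochargeLabeling (w : List ℕ) : List ℕ := w.map (entryLabel w)

/-- The cocharge of `w`: the sum of the entries of its cocharge labeling. -/
def cocharge (w : List ℕ) : ℕ := (cochargeLabeling w).sum

/-- Swap the entries of `w` in (0-indexed) positions `j` and `j+1`. -/
def swapAdj (w : List ℕ) (j : ℕ) : List ℕ :=
  (w.set j (w.getD (j + 1) 0)).set (j + 1) (w.getD j 0)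


/-- The extension `w̃ : ℤ_{≤ n} → ℤ_{≥ 0}` of the cocharge labeling `z` of `w`:
`w̃ i = z_{i + k n} + k` where `k` is the unique integer with `i + k n ∈ [1, n]`
(defined on all of `ℤ`; only values at `i ≤ n` are relevant). -/
def extFn (w : List ℕ) (n : ℕ) (i : ℤ) : ℤ :=
  ((cochargeLabeling w).getD ((i - 1).emod (n : ℤ)).toNat 0 : ℤ) - (i - 1).fdiv (n : ℤ)

/-- `j` (restricted to indices `0, …, k'`) is a chain of `g` of length `k' + 1`:
`j_{k'} < ⋯ < j_0` are integers `≤ n` with `g (j_i) = i` and pairwise distinct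
residues mod `n`. -/
def IsChainOf (g : ℤ → ℤ) (n : ℕ) (k' : ℕ) (j : ℕ → ℤ) : Prop :=
  (∀ i ≤ k', j i ≤ (n : ℤ)) ∧
  (∀ i, i + 1 ≤ k' → j (i + 1) < j i) ∧
  (∀ i ≤ k', g (j i) = (i : ℤ)) ∧
  (∀ i i', i ≤ k' → i' ≤ k' → i ≠ i' → j i % (n : ℤ) ≠ j i' % (n : ℤ))

/-- A `k`-bounded chain family of `g`: finitely many chains of `g`, each of
length at most `k`, whose residue sets mod `n` are pairwise disjoint. -/
structure BddChainFamily (g : ℤ → ℤ) (n k : ℕ) where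
  /-- the number of chains -/
  L : ℕ
  /-- `len t + 1` is the length of the `t`-th chain -/
  len : Fin L → ℕ
  /-- the `t`-th chain -/
  j : Fin L → ℕ → ℤ
  chain : ∀ t, IsChainOf g n (len t) (j t)
  bdd : ∀ t, len t + 1 ≤ k
  disj : ∀ t t', t ≠ t' → ∀ i i', i ≤ len t → i' ≤ len t' →
    j t i % (n : ℤ) ≠ j t' i' % (n : ℤ)

/-- The size of a chain family: the cardinality of its support, the union of
the underlying sets of its chains. -/
def BddChainFamily.size {g : ℤ → ℤ} {n k : ℕ} (A : BddChainFamily g n k) : ℕ :=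
  ((Finset.univ : Finset (Fin A.L)).biUnion
    (fun t => (Finset.range (A.len t + 1)).image (A.j t))).card

/-- `I_k(g)`: the maximum size of a `k`-bounded chain family of `g`. -/
noncomputable def Ik (g : ℤ → ℤ) (n k : ℕ) : ℕ :=
  sSup {m | ∃ A : BddChainFamily g n k, A.size = m}

/-- The affine simple reflection `s_d` (for `1 ≤ d ≤ n - 1`): it transposes
`d + k n` and `d + 1 + k n` for every integer `k`. -/
def affSwap (n d : ℕ) (m : ℤ) : ℤ :=
  if m % (n : ℤ) = (d : ℤ) % (n : ℤ) then m + 1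
  else if m % (n : ℤ) = ((d : ℤ) + 1) % (n : ℤ) then m - 1
  else m


/-!
Putting the last letter `a` of `u` in front changes the cocharge labeling only at `a`: the
descent at `a - 1` appears and the one at `a` disappears, so the label of `a` goes up by one
(provided `a ≠ 1`, which is what a nonzero label says). Hence `ṽ i = ũ (i - 1)`: `ṽ` is `ũ`
translated by one. Translating every chain by one is then a size-preserving bijection between the
chain families of `ṽ` and of `ũ`; the only thing that could go wrong is a chain of `ũ` through
`n`, but such a chain would have to start at `n` with `ũ n = 0`, while `ũ n` is the label of `a`.
-/

namespace IsChainOf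

variable {g : ℤ → ℤ} {n k' : ℕ} {j : ℕ → ℤ}

lemma add_le_head (hj : IsChainOf g n k' j) {i : ℕ} (hi : i ≤ k') : j i + i ≤ j 0 := by
  induction i with
  | zero => simp
  | succ m ih =>
    have := hj.2.1 m hi
    have := ih (by omega)
    push_cast
    omega

lemma lt_of_apply_ne_zero (hj : IsChainOf g n k' j) (hn : g n ≠ 0) {i : ℕ} (hi : i ≤ k') :
    j i < n := by
  have hhead : j 0 ≠ n := fun h => hn (by simpa [h] using hj.2.2.1 0 (Nat.zero_le _))
  have := hj.add_le_head hi
  have := hj.1 0 (Nat.zero_le _)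
  omega

lemma translate {g' : ℤ → ℤ} (hj : IsChainOf g n k' j) (c : ℤ) (hg : ∀ x, g' (x + c) = g x)
    (hbd : ∀ i ≤ k', j i + c ≤ n) : IsChainOf g' n k' (fun i => j i + c) := by
  obtain ⟨-, hdec, hval, hres⟩ := hj
  refine ⟨hbd, fun i hi => by simpa using hdec i hi, fun i hi => by simp [hg, hval i hi],
    fun i i' hi hi' hne h => hres i i' hi hi' hne ?_⟩
  exact Int.ModEq.add_right_cancel' c h

end IsChainOf

namespace BddChainFamily

variable {g g' : ℤ → ℤ} {n k : ℕ}

def translate (A : BddChainFamily g n k) (c : ℤ) (hg : ∀ x, g' (x + c) = g x)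
    (hbd : ∀ t, ∀ i ≤ A.len t, A.j t i + c ≤ n) : BddChainFamily g' n k where
  L := A.L
  len := A.len
  j t i := A.j t i + c
  chain t := (A.chain t).translate c hg (hbd t)
  bdd := A.bdd
  disj t t' hne i i' hi hi' h := A.disj t t' hne i i' hi hi' (Int.ModEq.add_right_cancel' c h)

lemma size_translate (A : BddChainFamily g n k) (c : ℤ) (hg : ∀ x, g' (x + c) = g x)
    (hbd : ∀ t, ∀ i ≤ A.len t, A.j t i + c ≤ n) : (A.translate c hg hbd).size = A.size := by
  change (Finset.univ.biUnion fun t => (Finset.range (A.len t + 1)).image fun i => A.j t i + c).card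
    = A.size
  rw [size, eq_comm, ← Finset.card_image_of_injective _ (add_left_injective c),
    Finset.biUnion_image]
  simp only [Finset.image_image]
  rfl

end BddChainFamily

lemma Ik_comp_sub_one {g : ℤ → ℤ} {n : ℕ} (hn : g n ≠ 0) (k : ℕ) :
    Ik (fun i => g (i - 1)) n k = Ik g n k := by
  unfold Ik
  congr 1
  ext m
  constructor
  · rintro ⟨A, rfl⟩
    refine ⟨A.translate (-1) (fun x => by simp [sub_eq_add_neg]) (fun t i hi => ?_),
      A.size_translate _ _ _⟩
    linarith [(A.chain t).1 i hi]
  · rintro ⟨A, rfl⟩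
    refine ⟨A.translate 1 (fun x => by simp) (fun t i hi => ?_), A.size_translate _ _ _⟩
    linarith [(A.chain t).lt_of_apply_ne_zero hn hi]

lemma IsStandardWord.mem_iff {n : ℕ} {w : List ℕ} (hw : IsStandardWord n w) {b : ℕ} :
    b ∈ w ↔ 1 ≤ b ∧ b ≤ n := by
  rw [List.Perm.mem_iff hw, List.mem_map]
  simp only [List.mem_range]
  exact ⟨by rintro ⟨c, hc, rfl⟩; omega, fun hb => ⟨b - 1, by omega, by omega⟩⟩

lemma IsStandardWord.nodup {n : ℕ} {w : List ℕ} (hw : IsStandardWord n w) : w.Nodup :=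
  hw.nodup_iff.mpr (List.nodup_range.map (add_left_injective 1))

lemma extFn_add_mul (w : List ℕ) {n r : ℕ} (hr : r < n) (q : ℤ) :
    extFn w n (r + 1 + n * q) = ((cochargeLabeling w).getD r 0 : ℤ) - q := by
  have hn : (0 : ℤ) < n := by omega
  have hsub : (r : ℤ) + 1 + n * q - 1 = r + n * q := by ring
  have hmod : (r + n * q : ℤ).emod n = r := by
    change (r + n * q : ℤ) % n = r
    rw [Int.add_mul_emod_self_left, Int.emod_eq_of_lt (by omega) (by omega)]
  have hdiv : (r + n * q : ℤ) / n = q := by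
    rw [Int.add_mul_ediv_left _ _ hn.ne', Int.ediv_eq_zero_of_lt (by omega) (by omega), zero_add]
  rw [extFn, hsub, Int.fdiv_eq_ediv_of_nonneg _ hn.le, hmod, hdiv, Int.toNat_natCast]

section Corotation

variable {n a : ℕ} {w : List ℕ}

lemma cochargeLabeling_append_singleton :
    cochargeLabeling (w ++ [a]) = w.map (entryLabel (w ++ [a])) ++ [entryLabel (w ++ [a]) a] :=
  List.map_append ..

lemma IsStandardWord.notMem_of_append_singleton (hu : IsStandardWord n (w ++ [a])) : a ∉ w := by
  have hnodup := hu.nodup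
  rw [← List.concat_eq_append, List.nodup_concat] at hnodup
  exact hnodup.1

lemma idxOf_corotation (hu : IsStandardWord n (w ++ [a])) {b : ℕ} (hb : b ∈ w ++ [a]) :
    (a :: w).idxOf b = (if b = a then 0 else w.idxOf b + 1) ∧
    (w ++ [a]).idxOf b = (if b = a then w.length else w.idxOf b) ∧
    (b = a ∨ w.idxOf b < w.length) := by
  rcases eq_or_ne b a with rfl | hba
  · simp [List.idxOf_append_of_notMem hu.notMem_of_append_singleton]
  · have hbw : b ∈ w := by simpa [hba] using hb
    simp [hba, List.idxOf_cons_ne w (Ne.symm hba), List.idxOf_append_of_mem hbw,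
      List.idxOf_lt_length_iff.mpr hbw]

lemma entryLabel_corotation (hu : IsStandardWord n (w ++ [a])) (ha : 2 ≤ a) {m : ℕ}
    (hm : 1 ≤ m) (hmn : m ≤ n) :
    entryLabel (a :: w) m = entryLabel (w ++ [a]) m + if m = a then 1 else 0 := by
  induction m, hm using Nat.le_induction with
  | base => rw [if_neg (by omega)]; rfl
  | succ m hm ih =>
    obtain ⟨m, rfl⟩ : ∃ m', m = m' + 1 := ⟨m - 1, by omega⟩
    obtain ⟨hv₁, hu₁, hl₁⟩ := idxOf_corotation hu (hu.mem_iff.mpr ⟨by omega, by omega⟩ :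
      m + 1 ∈ w ++ [a])
    obtain ⟨hv₂, hu₂, hl₂⟩ := idxOf_corotation hu (hu.mem_iff.mpr ⟨by omega, by omega⟩ :
      m + 2 ∈ w ++ [a])
    rw [entryLabel, entryLabel, ih (by omega), hv₁, hv₂, hu₁, hu₂]
    split_ifs <;> omega

lemma cochargeLabeling_corotation (hu : IsStandardWord n (w ++ [a])) (ha : 2 ≤ a) :
    cochargeLabeling (a :: w) =
      (entryLabel (w ++ [a]) a + 1) :: w.map (entryLabel (w ++ [a])) := by
  have hmem {b : ℕ} (hb : b ∈ w ++ [a]) := hu.mem_iff.mp hb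
  rw [cochargeLabeling, List.map_cons, entryLabel_corotation hu ha (hmem (by simp)).1
    (hmem (by simp)).2, if_pos rfl]
  congr 1
  refine List.map_congr_left fun b hb => ?_
  have hba : b ≠ a := fun h => hu.notMem_of_append_singleton (h ▸ hb)
  rw [entryLabel_corotation hu ha (hmem (by simp [hb])).1 (hmem (by simp [hb])).2, if_neg hba,
    add_zero]

lemma extFn_corotation (hu : IsStandardWord n (w ++ [a])) (ha : 2 ≤ a) (i : ℤ) :
    extFn (a :: w) n i = extFn (w ++ [a]) n (i - 1) := by
  have hlen : w.length + 1 = n := by simpa using hu.length_eq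
  have hn : (0 : ℤ) < n := by omega
  obtain ⟨r, q, hr, rfl⟩ : ∃ (r : ℕ) (q : ℤ), r < n ∧ i = r + 1 + n * q :=
    ⟨((i - 1) % n).toNat, (i - 1) / n, by have := Int.emod_lt_of_pos (i - 1) hn; omega,
      by have := Int.emod_nonneg (i - 1) hn.ne'; have := Int.mul_ediv_add_emod (i - 1) n; omega⟩
  rw [extFn_add_mul _ hr, cochargeLabeling_corotation hu ha]
  rcases r with _ | r
  · rw [show (0 : ℕ) + 1 + n * q - 1 = w.length + 1 + n * (q - 1) by push_cast; linarith,
      extFn_add_mul _ (by omega), cochargeLabeling_append_singleton, List.getD_cons_zero,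
      List.getD_append_right _ _ _ _ (by simp), List.length_map, Nat.sub_self, List.getD_cons_zero]
    push_cast
    ring
  · rw [show ((r + 1 : ℕ) : ℤ) + 1 + n * q - 1 = r + 1 + n * q by push_cast; ring,
      extFn_add_mul _ (by omega), cochargeLabeling_append_singleton, List.getD_cons_succ,
      List.getD_append _ _ _ _ (by simp; omega)]

lemma extFn_append_singleton_natCast (hu : IsStandardWord n (w ++ [a])) :
    extFn (w ++ [a]) n n = entryLabel (w ++ [a]) a := by
  have hlen : w.length + 1 = n := by simpa using hu.length_eq
  rw [show (n : ℤ) = w.length + 1 + n * 0 by omega, extFn_add_mul _ (by omega),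
    cochargeLabeling_append_singleton, List.getD_append_right _ _ _ _ (by simp), List.length_map,
    Nat.sub_self, List.getD_cons_zero, sub_zero]

end Corotation

/-- If `v = a :: w` is a nonzero corotation of the standard word
`u = w ++ [a]` (the last entry `a` of `u` has nonzero cocharge label), then
`I_k(ṽ) = I_k(ũ)` for every `k`. -/
theorem Ik_nonzero_corotation (n : ℕ) (w : List ℕ) (a : ℕ)
    (hu : IsStandardWord n (w ++ [a]))
    (hnz : (cochargeLabeling (w ++ [a])).getLastD 0 ≠ 0) :
    ∀ k : ℕ, Ik (extFn (a :: w) n) n k = Ik (extFn (w ++ [a]) n) n k := by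
  intro k
  rw [cochargeLabeling_append_singleton, List.getLastD_concat] at hnz
  have ha : 2 ≤ a := by
    by_contra!
    interval_cases a <;> exact hnz rfl
  have hn : extFn (w ++ [a]) n n ≠ 0 := by
    rw [extFn_append_singleton_natCast hu]
    exact_mod_cast hnz
  rw [← Ik_comp_sub_one hn k]
  congr 1
  exact funext (extFn_corotation hu ha)
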